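/- Let $X$ be a totally disconnected locally compact Hausdorff space, $k$ a non-Archimedean valued field with non-trivial valuation, and $x \in X$ a P-point of $X$. Then the maximal ideal $m_{k,x} = \{f \in C_{bd}(X,k) : f(x) = 0\}$ of the ring $C_{bd}(X,k)$ of bounded continuous $k$-valued functions is a minimal prime ideal (has height $0$). -/

import Mathlib

/-- Evaluation of bounded continuous functions at a point, as a ring homomorphism. -/
def evalHom (X k : Type*) [TopologicalSpace X] [NormedField k] (x : X) :
    BoundedContinuousFunction X k →+* k where
  toFun f := f x
  map_one' := rfl
  map_mul' _ _ := rfl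
  map_zero' := rfl
  map_add' _ _ := rfl

/-- A point `x` is a P-point if the intersection of any countable family of
neighbourhoods of `x` is again a neighbourhood of `x`. -/
def IsPPoint {X : Type*} [TopologicalSpace X] (x : X) : Prop :=
  ∀ 𝒰 : Set (Set X), 𝒰.Countable → (∀ U ∈ 𝒰, U ∈ nhds x) → ⋂₀ 𝒰 ∈ nhds x

/-!
If `f(x) = 0` at a P-point `x`, the zero set of `f` is the intersection of the preimages of a
countable neighbourhood basis of `0` in `k`, hence a neighbourhood of `x`; since `X` is
zero-dimensional it contains a clopen neighbourhood `V` of `x`. The indicator `e` of `V`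
satisfies `f * e = 0` and `e(x) = 1`, so a prime `p ⊆ m_x` contains `f`, because `e ∉ p`.
-/

open Filter Topology

section PPoint

variable {X : Type*} [TopologicalSpace X] {x : X}

theorem IsPPoint.countableInterFilter_nhds (hx : IsPPoint x) : CountableInterFilter (𝓝 x) :=
  ⟨hx⟩

theorem IsPPoint.eventually_eq_of_continuousAt {Y : Type*} [TopologicalSpace Y] [T1Space Y]
    [FirstCountableTopology Y] (hx : IsPPoint x) {f : X → Y} (hf : ContinuousAt f x) :
    ∀ᶠ y in 𝓝 x, f y = f x := by
  have := hx.countableInterFilter_nhds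
  obtain ⟨s, hs⟩ := (𝓝 (f x)).exists_antitone_basis
  have hmem : ∀ᶠ y in 𝓝 x, ∀ n, f y ∈ s n :=
    eventually_countable_forall.2 fun n => hf (hs.mem n)
  filter_upwards [hmem] with y hy
  have hinter : ⋂ (n) (_ : True), s n = {f x} := biInter_basis_nhds hs.toHasBasis
  exact Set.mem_singleton_iff.mp (hinter ▸ Set.mem_iInter₂.2 fun n _ => hy n)

theorem IsPPoint.exists_isClopen_eqOn [TotallyDisconnectedSpace X] [LocallyCompactSpace X]
    [T2Space X] {Y : Type*} [TopologicalSpace Y] [T1Space Y] [FirstCountableTopology Y]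
    (hx : IsPPoint x) {f : X → Y} (hf : Continuous f) :
    ∃ V : Set X, IsClopen V ∧ x ∈ V ∧ ∀ y ∈ V, f y = f x :=
  let ⟨V, hV, hxV, hVf⟩ := loc_compact_Haus_tot_disc_of_zero_dim.mem_nhds_iff.mp
    (hx.eventually_eq_of_continuousAt hf.continuousAt)
  ⟨V, hV, hxV, hVf⟩

end PPoint

namespace BoundedContinuousFunction

variable {X : Type*} [TopologicalSpace X] (R : Type*) [SeminormedRing R] [NormOneClass R]

noncomputable def clopenIndicator {V : Set X} (hV : IsClopen V) : X →ᵇ R :=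
  ofNormedAddCommGroup (V.indicator 1) (LocallyConstant.charFn R hV).continuous 1 fun y =>
    (norm_indicator_le_norm_self 1 y).trans_eq norm_one

@[simp]
theorem coe_clopenIndicator {V : Set X} (hV : IsClopen V) :
    (clopenIndicator R hV : X → R) = V.indicator 1 :=
  rfl

end BoundedContinuousFunction

open BoundedContinuousFunction

theorem stmt_5_general {X k : Type*} [TopologicalSpace X] [TotallyDisconnectedSpace X]
    [LocallyCompactSpace X] [T2Space X] [NormedField k] (x : X) (hx : IsPPoint x) :
    ∀ p : Ideal (BoundedContinuousFunction X k), p.IsPrime →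
      p ≤ RingHom.ker (evalHom X k x) → p = RingHom.ker (evalHom X k x) := by
  intro p hp hple
  refine le_antisymm hple fun f (hf : f x = 0) => ?_
  obtain ⟨V, hV, hxV, hfV⟩ := hx.exists_isClopen_eqOn f.continuous
  have hfe : f * clopenIndicator k hV = 0 := by
    ext y
    by_cases hy : y ∈ V <;> simp [hy, hfV, hf]
  have he : clopenIndicator k hV ∉ p := fun h => by
    have hex : clopenIndicator k hV x = 0 := hple h
    simp [hxV] at hex
  exact (hp.mem_or_mem (hfe ▸ p.zero_mem)).resolve_right he

theorem stmt_5 {X k : Type*} [TopologicalSpace X] [TotallyDisconnectedSpace X]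
    [LocallyCompactSpace X] [T2Space X] [NormedField k] [IsUltrametricDist k]
    (hk : ∃ a : k, 0 < ‖a‖ ∧ ‖a‖ < 1) (x : X) (hx : IsPPoint x) :
    ∀ p : Ideal (BoundedContinuousFunction X k), p.IsPrime →
      p ≤ RingHom.ker (evalHom X k x) → p = RingHom.ker (evalHom X k x) :=
  stmt_5_general x hx
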